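/- arXiv:1406.7597 — 4 statements merged into one kernel-verified Lean document; each statement's English description precedes it below -/
import Mathlib

section
/- Let f(x) ∈ F_2[x] be a polynomial of degree m ≥ 1 with no repeated roots (i.e., f is squarefree), let r be the number of irreducible factors of f over F_2 counted with multiplicity, and let F(x) ∈ ℤ[x] be any monic polynomial of degree m whose reduction modulo 2 equals f. Then the discriminant D(F) is congruent to 1 or 5 modulo 8, and moreover r ≡ m (mod 2) if and only if D(F) ≡ 1 (mod 8). -/
/-!
Expand the Vandermonde determinant `δ(x) = ∏_{i<j} (x_j - x_i)` as `P(x) - N(x)`, where `P` and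
`N` collect the Leibniz terms of even and of odd permutations. `P + N` and `P N` are symmetric, so
at the roots of `F` they are integers `s` and `p`, and `D = δ² = s² - 4p`. Evaluating the same
universal expressions at the roots `y` of `f` in a splitting field (characteristic 2) gives
`s ≡ P(y) + N(y) = δ(y) ≠ 0`, so `s` is odd and `D ≡ 1 - 4p (mod 8)`. The Frobenius permutes the
roots `y` by a permutation `π` whose cycles are the irreducible factors of `f`, so
`sign π = (-1)^(m + r)`; and `P(y)² = P(y ∘ π)` equals `P(y)` or `N(y) = 1 + P(y)` according to
this sign, which makes `p ≡ P(y) N(y) = P(y) + P(y)²` even exactly when `π` is even.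
-/

open Polynomial Finset Equiv Matrix

universe u

theorem Fintype.prod_X_sub_C_coeff {σ A : Type*} [Fintype σ] [CommRing A] (v : σ → A) {k : ℕ}
    (hk : k ≤ Fintype.card σ) :
    (∏ i, (X - C (v i))).coeff (Fintype.card σ - k) = (-1) ^ k * (univ.val.map v).esymm k := by
  have h := Multiset.prod_X_sub_C_coeff (univ.val.map v) (k := Fintype.card σ - k) (by simp)
  simp only [Multiset.card_map, card_val, card_univ, Nat.sub_sub_self hk, Multiset.map_map] at h
  rwa [prod_eq_multiset_prod]

theorem MvPolynomial.IsSymmetric.exists_algebraMap_eq_aeval {σ R : Type*} [Fintype σ]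
    [CommRing R] {S : MvPolynomial σ R} (hS : S.IsSymmetric) (F : R[X]) :
    ∃ z : R, ∀ (A : Type u) [CommRing A] [Algebra R A] (v : σ → A),
      F.map (algebraMap R A) = ∏ i, (Polynomial.X - Polynomial.C (v i)) →
        algebraMap R A z = aeval v S := by
  set n := Fintype.card σ
  obtain ⟨Φ, hΦ⟩ := esymmAlgHom_surjective R le_rfl ⟨S, hS⟩
  have hS : aeval (fun i : Fin n => esymm σ R (i + 1)) Φ = S := by
    rw [← esymmAlgHom_apply, hΦ]
  refine ⟨aeval (fun i : Fin n => (-1) ^ ((i : ℕ) + 1) * F.coeff (n - (i + 1))) Φ,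
    fun A _ _ v hv => ?_⟩
  rw [← aeval_algebraMap_apply, ← hS, comp_aeval_apply]
  congr 2
  funext i
  have hcoeff := congrArg (Polynomial.coeff · (n - ((i : ℕ) + 1))) hv
  rw [Polynomial.coeff_map] at hcoeff
  rw [Function.comp_apply, map_mul, hcoeff, Fintype.prod_X_sub_C_coeff v i.isLt,
    aeval_esymm_eq_multiset_esymm, ← mul_assoc, map_pow, map_neg, map_one, ← pow_add,
    Even.neg_one_pow ⟨_, rfl⟩, one_mul]

namespace Stickelberger

variable {m : ℕ} {A B : Type*} [CommRing A] [CommRing B]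

noncomputable def vandermondeSignSum (s : ℤˣ) (v : Fin m → A) : A :=
  ∑ σ : Perm (Fin m) with Perm.sign σ = s, ∏ i, v (σ i) ^ (i : ℕ)

theorem det_vandermonde_eq_signSum_sub (v : Fin m → A) :
    (vandermonde v).det = vandermondeSignSum 1 v - vandermondeSignSum (-1) v := by
  rw [det_apply, ← sum_filter_add_sum_filter_not _ (fun σ => Perm.sign σ = 1),
    sub_eq_add_neg, vandermondeSignSum, vandermondeSignSum, ← sum_neg_distrib]
  congr 1
  · exact sum_congr rfl fun σ hσ => by simp [(mem_filter.1 hσ).2]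
  · refine sum_congr (by simp [Int.units_ne_iff_eq_neg]) fun σ hσ => ?_
    simp [(mem_filter.1 hσ).2]

theorem map_vandermondeSignSum (g : A →+* B) (s : ℤˣ) (v : Fin m → A) :
    g (vandermondeSignSum s v) = vandermondeSignSum s (g ∘ v) := by
  simp [vandermondeSignSum]

theorem vandermondeSignSum_comp_perm (s : ℤˣ) (v : Fin m → A) (π : Perm (Fin m)) :
    vandermondeSignSum s (v ∘ π) = vandermondeSignSum (Perm.sign π * s) v :=
  sum_equiv (Equiv.mulLeft π) (by simp) fun σ _ => rfl

theorem vandermondeSignSum_one_sq_of_apply_eq_sq [CharP A 2] {v : Fin m → A} {π : Perm (Fin m)}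
    (hπ : ∀ i, v (π i) = v i ^ 2) :
    vandermondeSignSum 1 v ^ 2 = vandermondeSignSum (Perm.sign π) v := by
  rw [← frobenius_def, map_vandermondeSignSum, ← mul_one (Perm.sign π),
    ← vandermondeSignSum_comp_perm]
  exact congrArg _ (funext fun i => (hπ i).symm)

theorem vandermondeSignSum_mul_of_apply_eq_sq [CharP A 2] {v : Fin m → A} {π : Perm (Fin m)}
    (hπ : ∀ i, v (π i) = v i ^ 2) (hsum : vandermondeSignSum 1 v + vandermondeSignSum (-1) v = 1) :
    vandermondeSignSum 1 v * vandermondeSignSum (-1) v = if Perm.sign π = 1 then 0 else 1 := by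
  have hsq := vandermondeSignSum_one_sq_of_apply_eq_sq hπ
  rw [← eq_sub_iff_add_eq', CharTwo.sub_eq_add] at hsum
  rcases Int.units_eq_one_or (Perm.sign π) with h | h <;> rw [h] at hsq
  · rw [if_pos h, hsum, mul_add, mul_one, ← sq, hsq, CharTwo.add_self_eq_zero]
  · rw [if_neg (by simp [h]), hsum, mul_add, mul_one, ← sq, hsq, hsum, add_left_comm,
      CharTwo.add_self_eq_zero, add_zero]

theorem det_vandermonde_sq_eq (v : Fin m → A) :
    (vandermonde v).det ^ 2 = (vandermondeSignSum 1 v + vandermondeSignSum (-1) v) ^ 2 -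
      4 * (vandermondeSignSum 1 v * vandermondeSignSum (-1) v) := by
  rw [det_vandermonde_eq_signSum_sub]
  ring

theorem det_vandermonde_sq (v : Fin m → A) :
    (vandermonde v).det ^ 2 = ∏ i : Fin m, ∏ j ∈ univ.filter (fun j => i < j), (v i - v j) ^ 2 := by
  rw [det_vandermonde, ← prod_pow]
  refine prod_congr rfl fun i _ => ?_
  rw [← prod_pow]
  exact prod_congr (by ext; simp) fun j _ => by ring

theorem aeval_vandermondeSignSum_X {R : Type*} [CommRing R] [Algebra R A] (s : ℤˣ)
    (v : Fin m → A) :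
    MvPolynomial.aeval v (vandermondeSignSum s MvPolynomial.X : MvPolynomial (Fin m) R) =
      vandermondeSignSum s v := by
  rw [← AlgHom.coe_toRingHom, map_vandermondeSignSum]
  exact congrArg _ (funext fun i => by simp)

theorem rename_vandermondeSignSum_X (s : ℤˣ) (e : Perm (Fin m)) :
    MvPolynomial.rename e (vandermondeSignSum s MvPolynomial.X : MvPolynomial (Fin m) A) =
      vandermondeSignSum (Perm.sign e * s) MvPolynomial.X := by
  rw [← AlgHom.coe_toRingHom, map_vandermondeSignSum, ← vandermondeSignSum_comp_perm]
  exact congrArg _ (funext fun i => by simp)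

theorem isSymmetric_vandermondeSignSum_add :
    (vandermondeSignSum 1 MvPolynomial.X + vandermondeSignSum (-1) MvPolynomial.X :
      MvPolynomial (Fin m) A).IsSymmetric := by
  intro e
  rw [map_add, rename_vandermondeSignSum_X, rename_vandermondeSignSum_X]
  rcases Int.units_eq_one_or (Perm.sign e) with h | h <;> simp [h, add_comm]

theorem isSymmetric_vandermondeSignSum_mul :
    (vandermondeSignSum 1 MvPolynomial.X * vandermondeSignSum (-1) MvPolynomial.X :
      MvPolynomial (Fin m) A).IsSymmetric := by
  intro e
  rw [map_mul, rename_vandermondeSignSum_X, rename_vandermondeSignSum_X]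
  rcases Int.units_eq_one_or (Perm.sign e) with h | h <;> simp [h, mul_comm]

theorem exists_algebraMap_eq_vandermondeSignSum {R : Type*} [CommRing R] (F : R[X]) :
    ∃ s p : R, ∀ (A : Type u) [CommRing A] [Algebra R A] (v : Fin m → A),
      F.map (algebraMap R A) = ∏ i, (X - C (v i)) →
        algebraMap R A s = vandermondeSignSum 1 v + vandermondeSignSum (-1) v ∧
        algebraMap R A p = vandermondeSignSum 1 v * vandermondeSignSum (-1) v := by
  obtain ⟨s, hs⟩ := isSymmetric_vandermondeSignSum_add.exists_algebraMap_eq_aeval F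
  obtain ⟨p, hp⟩ := isSymmetric_vandermondeSignSum_mul.exists_algebraMap_eq_aeval F
  refine ⟨s, p, fun A _ _ v hv => ⟨?_, ?_⟩⟩
  · rw [hs A v hv, map_add, aeval_vandermondeSignSum_X, aeval_vandermondeSignSum_X]
  · rw [hp A v hv, map_mul, aeval_vandermondeSignSum_X, aeval_vandermondeSignSum_X]

theorem eq_sq_sub_four_mul_of_charZero [CharZero A] {v : Fin m → A} {s p D : ℤ}
    (hs : (s : A) = vandermondeSignSum 1 v + vandermondeSignSum (-1) v)
    (hp : (p : A) = vandermondeSignSum 1 v * vandermondeSignSum (-1) v)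
    (hD : (D : A) = ∏ i : Fin m, ∏ j ∈ univ.filter (fun j => i < j), (v i - v j) ^ 2) :
    D = s ^ 2 - 4 * p := by
  apply Int.cast_injective (α := A)
  rw [hD, ← det_vandermonde_sq, det_vandermonde_sq_eq, ← hs, ← hp]
  push_cast
  ring

section CharTwo

variable [CharP A 2] {v : Fin m → A} {s p : ℤ}

theorem odd_of_charTwo [IsDomain A]
    (hs : (s : A) = vandermondeSignSum 1 v + vandermondeSignSum (-1) v)
    (hinj : Function.Injective v) : Odd s := by
  rw [← Int.not_even_iff_odd]
  intro h
  apply det_vandermonde_ne_zero_iff.2 hinj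
  rw [det_vandermonde_eq_signSum_sub, CharTwo.sub_eq_add, ← hs, CharTwo.intCast_eq_ite, if_pos h]

theorem even_iff_sign_eq_one_of_charTwo [Nontrivial A] {π : Perm (Fin m)}
    (hs : (s : A) = vandermondeSignSum 1 v + vandermondeSignSum (-1) v)
    (hπ : ∀ i, v (π i) = v i ^ 2) (hs_odd : Odd s)
    (hp : (p : A) = vandermondeSignSum 1 v * vandermondeSignSum (-1) v) :
    Even p ↔ Perm.sign π = 1 := by
  have hsum : vandermondeSignSum 1 v + vandermondeSignSum (-1) v = 1 := by
    rw [← hs, CharTwo.intCast_eq_ite, if_neg (Int.not_even_iff_odd.2 hs_odd)]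
  have hprod := vandermondeSignSum_mul_of_apply_eq_sq hπ hsum
  rw [← hp, CharTwo.intCast_eq_ite] at hprod
  by_cases hpe : Even p <;> by_cases hπ1 : Perm.sign π = 1 <;>
    simp only [hpe, hπ1, if_true, if_false, zero_ne_one, one_ne_zero] at hprod <;> tauto

end CharTwo

end Stickelberger

namespace Equiv.Perm

theorem subtypeCongr_subtypePerm {α : Type*} (σ : Perm α) {p : α → Prop} [DecidablePred p]
    (hp : ∀ a, p (σ a) ↔ p a) :
    (σ.subtypePerm hp).subtypeCongr (σ.subtypePerm fun a => (hp a).not) = σ := by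
  ext a
  by_cases h : p a <;> simp [h]

variable {α : Type*} [Fintype α] [DecidableEq α]

theorem sign_of_isCycleOn_univ [Nonempty α] {σ : Perm α} (hσ : σ.IsCycleOn _root_.Set.univ) :
    sign σ = (-1) ^ (Fintype.card α + 1) := by
  rcases subsingleton_or_nontrivial α with hα | hα
  · have : Fintype.card α = 1 :=
      le_antisymm (Fintype.card_le_one_iff_subsingleton.2 hα) Fintype.card_pos
    simp [Subsingleton.elim σ 1, this]
  have hsupp : σ.support = univ := by
    ext a
    simpa using hσ.apply_ne _root_.Set.nontrivial_univ (Set.mem_univ a)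
  have hcycle : σ.IsCycle :=
    isCycle_iff_exists_isCycleOn.2 ⟨_, _root_.Set.nontrivial_univ, hσ, fun a _ => Set.mem_univ a⟩
  rw [hcycle.sign, hsupp, card_univ, pow_succ, mul_neg_one]

theorem sign_eq_neg_one_pow_of_sameCycle_iff {β : Type*} [DecidableEq β] (σ : Perm α)
    (c : α → β) (hc : ∀ a b, σ.SameCycle a b ↔ c a = c b) :
    sign σ = (-1) ^ (Fintype.card α + #(univ.image c)) := by
  induction h : Fintype.card α using Nat.strong_induction_on generalizing α with
  | _ n ih =>
  rcases isEmpty_or_nonempty α with hα | ⟨⟨a₀⟩⟩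
  · simp [Subsingleton.elim σ 1, ← h]
  set b := c a₀
  have hp : ∀ a, c (σ a) = b ↔ c a = b := fun a => by
    rw [← (hc a (σ a)).1 (sameCycle_apply_right.2 .rfl)]
  have hpos : 0 < Fintype.card {a // c a = b} := Fintype.card_pos_iff.2 ⟨⟨a₀, rfl⟩⟩
  have hcard : Fintype.card {a // c a = b} + Fintype.card {a // c a ≠ b} = n := by
    have := Fintype.card_subtype_le (fun a => c a = b)
    rw [Fintype.card_subtype_compl]
    omega
  have hfiber : sign (σ.subtypePerm (p := fun a => c a = b) hp) =
      (-1) ^ (Fintype.card {a // c a = b} + 1) := by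
    have : Nonempty {a // c a = b} := ⟨⟨a₀, rfl⟩⟩
    refine sign_of_isCycleOn_univ ⟨(σ.subtypePerm hp).bijOn fun _ => Iff.rfl, fun x _ y _ => ?_⟩
    rw [sameCycle_subtypePerm, hc, x.2, y.2]
  have hrest := ih _ (by omega) (σ.subtypePerm (p := fun a => c a ≠ b) fun a => (hp a).not)
    (fun a => c a) (fun x y => by rw [sameCycle_subtypePerm, hc]) rfl
  have himage : univ.image c = insert b (univ.image fun a : {a // c a ≠ b} => c a) := by
    ext b'
    by_cases hb' : b' = b
    · simp [hb', b]
    · simp only [mem_image, mem_univ, true_and, mem_insert, hb', false_or, Subtype.exists]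
      exact ⟨fun ⟨a, ha⟩ => ⟨a, fun h => hb' (ha ▸ h), ha⟩, fun ⟨a, _, ha⟩ => ⟨a, ha⟩⟩
  have hb : b ∉ univ.image fun a : {a // c a ≠ b} => c a := by simp
  rw [← subtypeCongr_subtypePerm σ (p := fun a => c a = b) hp, sign_subtypeCongr, hfiber, hrest,
    himage, card_insert_of_notMem hb, ← pow_add, ← hcard]
  congr 1
  ring

end Equiv.Perm

namespace Polynomial

theorem Splits.exists_fin_eq_prod {E : Type*} [Field E] {p : E[X]} (hp : p.Splits)
    (hm : p.Monic) {n : ℕ} (hn : p.natDegree = n) : ∃ y : Fin n → E, p = ∏ i, (X - C (y i)) := by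
  subst hn
  have hlen : p.roots.toList.length = p.natDegree := by
    rw [Multiset.length_toList, ← splits_iff_card_roots.1 hp]
  refine ⟨fun i => p.roots.toList[Fin.cast hlen.symm i], ?_⟩
  conv_lhs => rw [hp.eq_prod_roots_of_monic hm, ← Multiset.coe_toList p.roots,
    Multiset.map_coe, Multiset.prod_coe, ← Fin.prod_univ_fun_getElem]
  exact Fintype.prod_equiv (finCongr hlen) _ _ fun i => rfl

section Roots

variable {R E ι : Type*} [Fintype ι] {y : ι → E}

theorem aeval_eq_zero_iff_of_map_eq_prod [CommRing R] [CommRing E] [IsDomain E] [Algebra R E]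
    {f : R[X]} (hy : f.map (algebraMap R E) = ∏ i, (X - C (y i))) (z : E) :
    aeval z f = 0 ↔ ∃ i, y i = z := by
  rw [aeval_def, ← eval_map, hy, eval_prod, prod_eq_zero_iff]
  simp [sub_eq_zero, eq_comm]

theorem exists_perm_apply_eq_of_map_eq_prod [CommRing R] [Field E] [Algebra R E] {f : R[X]}
    (hy : f.map (algebraMap R E) = ∏ i, (X - C (y i))) (hinj : Function.Injective y)
    (φ : E →ₐ[R] E) : ∃ π : Perm ι, ∀ i, y (π i) = φ (y i) := by
  have hroot : ∀ i, ∃ j, y j = φ (y i) := fun i => by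
    rw [← aeval_eq_zero_iff_of_map_eq_prod hy, aeval_algHom_apply,
      (aeval_eq_zero_iff_of_map_eq_prod hy _).2 ⟨i, rfl⟩, map_zero]
  choose g hg using hroot
  have hg_inj : Function.Injective g := fun i j hij =>
    hinj ((φ : E →+* E).injective (by simp [← hg, hij]))
  exact ⟨Equiv.ofBijective g hg_inj.bijective_of_finite, hg⟩

variable [Field R] [Field E] [Algebra R E] {f : R[X]}

theorem injective_of_map_eq_prod_of_squarefree [PerfectField R] (hsf : Squarefree f)
    (hy : f.map (algebraMap R E) = ∏ i, (X - C (y i))) : Function.Injective y :=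
  separable_prod_X_sub_C_iff.1 (hy ▸ (PerfectField.separable_iff_squarefree.2 hsf).map)

theorem mem_normalizedFactors_iff_exists_minpoly_eq [DecidableEq R] [Algebra.IsIntegral R E]
    (hf : f ≠ 0) (hy : f.map (algebraMap R E) = ∏ i, (X - C (y i))) (g : R[X]) :
    g ∈ UniqueFactorizationMonoid.normalizedFactors f ↔ ∃ i, minpoly R (y i) = g := by
  rw [Polynomial.mem_normalizedFactors_iff hf]
  constructor
  · rintro ⟨hirr, hmonic, hdvd⟩
    have hsplit : (g.map (algebraMap R E)).Splits :=
      (Splits.prod fun i _ => Splits.X_sub_C (y i)).of_dvd (hy ▸ map_ne_zero hf)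
        (hy ▸ Polynomial.map_dvd _ hdvd)
    obtain ⟨z, hz⟩ := hsplit.exists_eval_eq_zero
      (by rw [degree_map]; exact (degree_pos_of_irreducible hirr).ne')
    rw [eval_map_algebraMap] at hz
    obtain ⟨i, rfl⟩ := (aeval_eq_zero_iff_of_map_eq_prod hy z).1
      (aeval_eq_zero_of_dvd_aeval_eq_zero hdvd hz)
    exact ⟨i, (minpoly.eq_of_irreducible_of_monic hirr hz hmonic).symm⟩
  · rintro ⟨i, rfl⟩
    have hint := Algebra.IsIntegral.isIntegral (R := R) (y i)
    exact ⟨minpoly.irreducible hint, minpoly.monic hint,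
      minpoly.dvd R (y i) ((aeval_eq_zero_iff_of_map_eq_prod hy _).2 ⟨i, rfl⟩)⟩

end Roots

section FiniteField

variable {k E ι : Type*} [Field k] [Fintype k] [Field E] [Finite E] [Algebra k E] {y : ι → E}
  {π : Perm ι}

/-- The Galois group of `E/k` is generated by the Frobenius, and its orbits on roots are the classes
of conjugates. -/
theorem sameCycle_iff_minpoly_eq_of_apply_eq_pow_card (hinj : Function.Injective y)
    (hπ : ∀ i, y (π i) = y i ^ Fintype.card k) (i j : ι) :
    π.SameCycle i j ↔ minpoly k (y i) = minpoly k (y j) := by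
  have : Finite ι := Finite.of_injective y hinj
  have hpow : ∀ n : ℕ,
      y ((π ^ n) i) = (FiniteField.frobeniusAlgEquivOfAlgebraic k E ^ n) (y i) := fun n => by
    rw [AlgEquiv.coe_pow, FiniteField.coe_frobeniusAlgEquivOfAlgebraic_iterate, Perm.coe_pow,
      ← pow_iterate]
    exact Function.Semiconj.iterate_right (f := y) hπ n i
  rw [eq_comm, Normal.minpoly_eq_iff_mem_orbit, MulAction.mem_orbit_iff]
  constructor
  · intro h
    obtain ⟨n, hn⟩ := h.exists_nat_pow_eq
    exact ⟨_, by rw [AlgEquiv.smul_def, ← hpow, hn]⟩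
  · rintro ⟨g, hg⟩
    obtain ⟨n, rfl⟩ := (FiniteField.bijective_frobeniusAlgEquivOfAlgebraic_pow k E).2 g
    exact ⟨n, hinj (by rw [← hg, AlgEquiv.smul_def, ← hpow, zpow_natCast])⟩

theorem sign_eq_of_apply_eq_pow_card [DecidableEq k] [Fintype ι] [DecidableEq ι] {f : k[X]}
    (hsf : Squarefree f) (hy : f.map (algebraMap k E) = ∏ i, (X - C (y i)))
    (hπ : ∀ i, y (π i) = y i ^ Fintype.card k) :
    Perm.sign π =
      (-1) ^ (Fintype.card ι + Multiset.card (UniqueFactorizationMonoid.normalizedFactors f)) := by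
  classical
  have hf : f ≠ 0 := hsf.ne_zero
  have hinj := injective_of_map_eq_prod_of_squarefree hsf hy
  have himage : univ.image (fun i => minpoly k (y i)) =
      (UniqueFactorizationMonoid.normalizedFactors f).toFinset := by
    ext g
    rw [Multiset.mem_toFinset, mem_normalizedFactors_iff_exists_minpoly_eq hf hy]
    simp
  rw [π.sign_eq_neg_one_pow_of_sameCycle_iff (fun i => minpoly k (y i))
      (sameCycle_iff_minpoly_eq_of_apply_eq_pow_card hinj hπ), himage,
    Multiset.toFinset_card_of_nodup
      ((UniqueFactorizationMonoid.squarefree_iff_nodup_normalizedFactors hf).1 hsf)]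

end FiniteField

theorem exists_frobenius_perm_roots {k : Type*} [Field k] [Fintype k] [DecidableEq k] {f : k[X]}
    (hsf : Squarefree f) (hf : f.Monic) {m : ℕ} (hm : f.natDegree = m) :
    ∃ (y : Fin m → f.SplittingField) (π : Perm (Fin m)),
      f.map (algebraMap k _) = ∏ i, (X - C (y i)) ∧ Function.Injective y ∧
      (∀ i, y (π i) = y i ^ Fintype.card k) ∧
      Perm.sign π = (-1) ^ (m + Multiset.card (UniqueFactorizationMonoid.normalizedFactors f)) := by
  obtain ⟨y, hy⟩ :=
    (SplittingField.splits f).exists_fin_eq_prod (hf.map _) ((natDegree_map _).trans hm)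
  have hinj := injective_of_map_eq_prod_of_squarefree hsf hy
  obtain ⟨π, hπ⟩ := exists_perm_apply_eq_of_map_eq_prod hy hinj (FiniteField.frobeniusAlgHom k _)
  refine ⟨y, π, hy, hinj, hπ, ?_⟩
  simpa using sign_eq_of_apply_eq_pow_card hsf hy hπ

end Polynomial

theorem Int.sq_sub_four_mul_emod_eight {s p : ℤ} (hs : Odd s) :
    (s ^ 2 - 4 * p) % 8 = if Even p then 1 else 5 := by
  obtain ⟨t, rfl⟩ := hs
  obtain ⟨u, hu⟩ := Int.even_mul_succ_self t
  have hsq : (2 * t + 1) ^ 2 = 8 * u + 1 := by linear_combination 4 * hu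
  rw [hsq]
  split_ifs with hp
  · obtain ⟨q, rfl⟩ := hp
    omega
  · obtain ⟨q, rfl⟩ := Int.not_even_iff_odd.1 hp
    omega

open Stickelberger in
theorem stickelberger_swan_general
    (m : ℕ)
    (f : Polynomial (ZMod 2)) (hfdeg : f.natDegree = m) (hsf : Squarefree f)
    (r : ℕ) (hr : r = (UniqueFactorizationMonoid.normalizedFactors f).card)
    (F : Polynomial ℤ) (hF : F.Monic)
    (hFf : F.map (Int.castRingHom (ZMod 2)) = f)
    (x : Fin m → ℂ)
    (hx : F.map (Int.castRingHom ℂ) = ∏ i : Fin m, (X - C (x i)))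
    (D : ℤ)
    (hD : (D : ℂ) =
      ∏ i : Fin m, ∏ j ∈ Finset.univ.filter (fun j => i < j), (x i - x j) ^ 2) :
    (D % 8 = 1 ∨ D % 8 = 5) ∧ (r % 2 = m % 2 ↔ D % 8 = 1) := by
  obtain ⟨s, p, hsp⟩ := exists_algebraMap_eq_vandermondeSignSum (m := m) F
  obtain ⟨hsC, hpC⟩ := hsp ℂ x (by rwa [algebraMap_int_eq])
  rw [eq_intCast] at hsC hpC
  obtain ⟨y, π, hy, hinj, hπ, hsign⟩ := exists_frobenius_perm_roots hsf (hFf ▸ hF.map _) hfdeg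
  obtain ⟨hsE, hpE⟩ := hsp _ y (by
    rw [← hy, ← congrArg (Polynomial.map (algebraMap (ZMod 2) _)) hFf, Polynomial.map_map]
    exact congrArg (F.map ·) (RingHom.ext_int _ _))
  rw [eq_intCast] at hsE hpE
  rw [ZMod.card] at hπ
  have hs_odd := odd_of_charTwo hsE hinj
  have hparity : r % 2 = m % 2 ↔ Even p := by
    rw [even_iff_sign_eq_one_of_charTwo hsE hπ hs_odd hpE, hsign, ← hr,
      neg_one_pow_eq_one_iff_even (by decide), Nat.even_add, Nat.even_iff, Nat.even_iff]
    omega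
  rw [eq_sq_sub_four_mul_of_charZero hsC hpC hD, Int.sq_sub_four_mul_emod_eight hs_odd, hparity]
  split_ifs with h <;> simp [h]

/-- Stickelberger–Swan theorem: for a squarefree `f ∈ F₂[x]` of degree `m ≥ 1` with `r`
irreducible factors, and any monic lift `F ∈ ℤ[x]` of `f`, the discriminant
`D(F) = ∏_{i<j} (xᵢ - xⱼ)²` (computed from the complex roots of `F`) satisfies
`D(F) ≡ 1` or `5 (mod 8)`, and `r ≡ m (mod 2)` iff `D(F) ≡ 1 (mod 8)`. -/
theorem stickelberger_swan
    (m : ℕ) (hm : 1 ≤ m)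
    (f : Polynomial (ZMod 2)) (hfdeg : f.natDegree = m) (hsf : Squarefree f)
    (r : ℕ) (hr : r = (UniqueFactorizationMonoid.normalizedFactors f).card)
    (F : Polynomial ℤ) (hF : F.Monic) (hFdeg : F.natDegree = m)
    (hFf : F.map (Int.castRingHom (ZMod 2)) = f)
    (x : Fin m → ℂ)
    (hx : F.map (Int.castRingHom ℂ) = ∏ i : Fin m, (X - C (x i)))
    (D : ℤ)
    (hD : (D : ℂ) =
      ∏ i : Fin m, ∏ j ∈ Finset.univ.filter (fun j => i < j), (x i - x j) ^ 2) :
    (D % 8 = 1 ∨ D % 8 = 5) ∧ (r % 2 = m % 2 ↔ D % 8 = 1) :=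
  stickelberger_swan_general m f hfdeg hsf r hr F hF hFf x hx D hD
end

section
/- Let m and n be positive integers with n even and 2 ≤ n ≤ ⌊m/2⌋ − 1. Then the pentanomial f(x) = x^m + x^{n+1} + x^n + x + 1 ∈ F_2[x] has no repeated roots; equivalently, f is squarefree in F_2[x]. -/
open Polynomial

/-- The Type I pentanomial `x^m + x^{n+1} + x^n + x + 1 ∈ F₂[x]` with `n` even and
`2 ≤ n ≤ ⌊m/2⌋ − 1` has no repeated roots, i.e. it is squarefree. -/
theorem typeI_pentanomial_squarefree
    (m n : ℕ) (hm : 0 < m) (hn : Even n) (hn2 : 2 ≤ n) (hnm : n ≤ m / 2 - 1) :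
    Squarefree ((X : Polynomial (ZMod 2)) ^ m + X ^ (n + 1) + X ^ n + X + 1) := by
  have hm6 : 6 ≤ m := by omega
  set f : Polynomial (ZMod 2) := X ^ m + X ^ (n + 1) + X ^ n + X + 1 with hf
  rw [← PerfectField.separable_iff_squarefree, Polynomial.separable_def]
  have hncast : ((n : ZMod 2)) = 0 := by
    rw [ZMod.natCast_eq_zero_iff]; exact hn.two_dvd
  have hd : derivative f = C ((m : ZMod 2)) * X ^ (m - 1) + X ^ n + 1 := by
    simp [hf, derivative_X_pow, hncast]
  refine (Polynomial.isCoprime_iff_aeval_ne_zero_of_isAlgClosed (k := ZMod 2)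
    (AlgebraicClosure (ZMod 2)) f (derivative f)).mpr ?_
  intro a
  by_contra h
  push_neg at h
  obtain ⟨h1, h2⟩ := h
  rw [hd] at h2
  simp only [hf, map_add, map_pow, map_mul, map_one, aeval_X, aeval_C, zero_mul, zero_add] at h1 h2
  rcases Nat.even_or_odd m with hme | hmo
  · have hmc : ((m : ZMod 2)) = 0 := by
      rw [ZMod.natCast_eq_zero_iff]; exact hme.two_dvd
    rw [hmc, map_zero] at h2
    have ham : a ^ m = 0 := by linear_combination h1 - (a + 1) * h2
    have ha0 : a = 0 := pow_eq_zero_iff (by omega) |>.mp ham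
    rw [ha0] at h2
    simp [zero_pow (by omega : n ≠ 0)] at h2
  · obtain ⟨k, hk⟩ := hmo
    subst hk
    have hmc : (((2 * k + 1 : ℕ) : ZMod 2)) = 1 := by
      push_cast
      have h2z : (2 : ZMod 2) = 0 := by decide
      rw [h2z]; ring
    rw [hmc, map_one, one_mul] at h2
    simp only [Nat.add_sub_cancel] at h2
    have hak : a ^ (2 * k) = 0 := by linear_combination (1 + a) * h2 - h1
    have ha0 : a = 0 := pow_eq_zero_iff (by omega) |>.mp hak
    rw [ha0] at h1
    simp [zero_pow (by omega : n ≠ 0)] at h1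
end

section
/- Let m be odd, n even with 4 ≤ n ≤ ⌊m/2⌋ − 1, and let K(x) = x^{m+1} + x^{m−1} + x^{m−n+1} + x^{m−n−1} + x + 1 ∈ ℤ[x] with complex roots x_0, …, x_m (with multiplicity). Let S_k = ∑_{i=0}^{m} x_i^k. Then S_m = −m, and S_k = 0 for every odd k with 1 ≤ k < m. -/
/-!
Write `c j` for the coefficient of `x^(m+1-j)` in `K`. Newton's identities give
`S k = -k c k - ∑_{0<j<k} c j S (k-j)` for `0 < k ≤ m + 1`. For `m` odd and `n` even every exponent
of `K` is even or at most `1`, so `c j = 0` for every odd `j < m`, while `c m = 1`. For odd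
`k`, each term `c j S (k-j)` has either `j` odd (and `c j = 0`) or `k - j` odd and smaller than `k`,
so by strong induction `S k = 0` for odd `k < m`, and then `S m = -m c m = -m`.
-/

open Polynomial Finset

theorem Polynomial.coeff_prod_X_sub_C_card_sub {R ι : Type*} [CommRing R] [Fintype ι]
    (x : ι → R) {j : ℕ} (hj : j ≤ Fintype.card ι) :
    (∏ i, (X - C (x i))).coeff (Fintype.card ι - j) = (-1) ^ j * (univ.val.map x).esymm j := by
  have h := Multiset.prod_X_sub_C_coeff (univ.val.map x) (k := Fintype.card ι - j) (by simp)
  rw [Multiset.map_map] at h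
  simp only [Multiset.card_map, card_val, card_univ, Nat.sub_sub_self hj] at h
  rwa [prod_eq_multiset_prod]

theorem Finset.Nat.sum_antidiagonal_filter_Ioo {M : Type*} [AddCommMonoid M] (k : ℕ)
    (f : ℕ → ℕ → M) :
    ∑ p ∈ antidiagonal k with p.1 ∈ Set.Ioo 0 k, f p.1 p.2 = ∑ a ∈ Ioo 0 k, f a (k - a) := by
  rw [sum_filter, Nat.sum_antidiagonal_eq_sum_range_succ
    (fun a b => if a ∈ Set.Ioo 0 k then f a b else 0), ← sum_filter]
  congr 1
  ext a
  simp only [mem_filter, mem_range, Set.mem_Ioo, mem_Ioo]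
  omega

/-- `c j` plays the role of the coefficient of `x ^ (N - j)` in a monic polynomial of degree `N`,
and `S k` that of its `k`-th power sum. -/
def SatisfiesNewton {A : Type*} [CommRing A] (c S : ℕ → A) (N : ℕ) : Prop :=
  ∀ k, 0 < k → k ≤ N → S k = -(k * c k) - ∑ a ∈ Ioo 0 k, c a * S (k - a)

theorem Polynomial.satisfiesNewton_prod_X_sub_C {R ι : Type*} [CommRing R] [Fintype ι]
    (x : ι → R) :
    SatisfiesNewton (fun j => (∏ i, (X - C (x i))).coeff (Fintype.card ι - j))
      (fun k => ∑ i, x i ^ k) (Fintype.card ι) := by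
  intro k hk0 hk
  beta_reduce
  have h := congrArg (MvPolynomial.aeval x) (MvPolynomial.psum_eq_mul_esymm_sub_sum ι R k hk0)
  simp only [map_sub, map_mul, map_sum, map_pow, map_neg, map_one, map_natCast,
    MvPolynomial.aeval_esymm_eq_multiset_esymm, MvPolynomial.psum, MvPolynomial.aeval_X] at h
  rw [Nat.sum_antidiagonal_filter_Ioo k
    (fun a b => (-1) ^ a * (univ.val.map x).esymm a * ∑ i, x i ^ b)] at h
  rw [h, coeff_prod_X_sub_C_card_sub x hk, pow_succ]
  congr 1
  · ring
  · refine sum_congr rfl fun a ha => ?_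
    rw [coeff_prod_X_sub_C_card_sub x ((mem_Ioo.1 ha).2.le.trans hk)]

theorem Polynomial.satisfiesNewton_of_map_eq_prod {A R ι : Type*} [CommRing A] [CommRing R]
    [Fintype ι] {f : A →+* R} (hf : Function.Injective f) {K : A[X]} {x : ι → R}
    (hx : K.map f = ∏ i, (X - C (x i))) {S : ℕ → A} (hS : ∀ k, f (S k) = ∑ i, x i ^ k) :
    SatisfiesNewton (fun j => K.coeff (Fintype.card ι - j)) S (Fintype.card ι) := by
  intro k hk0 hk
  apply hf
  simp only [map_sub, map_neg, map_mul, map_natCast, map_sum, hS, ← coeff_map, hx]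
  exact satisfiesNewton_prod_X_sub_C x k hk0 hk

namespace SatisfiesNewton

variable {A : Type*} [CommRing A] {c S : ℕ → A} {N : ℕ}

theorem mono (h : SatisfiesNewton c S N) {M : ℕ} (hMN : M ≤ N) : SatisfiesNewton c S M :=
  fun k hk0 hk => h k hk0 (hk.trans hMN)

theorem sum_Ioo_eq_zero_of_odd (hc : ∀ j, Odd j → j < N → c j = 0) {k : ℕ} (hk : Odd k)
    (hkN : k ≤ N) (hS : ∀ j < k, Odd j → S j = 0) :
    ∑ a ∈ Ioo 0 k, c a * S (k - a) = 0 := by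
  refine sum_eq_zero fun a ha => ?_
  rw [mem_Ioo] at ha
  rcases Nat.even_or_odd a with ha_even | ha_odd
  · rw [hS (k - a) (by omega) (Nat.Odd.sub_even ha.2.le hk ha_even), mul_zero]
  · rw [hc a ha_odd (by omega), zero_mul]

theorem odd_eq_zero (h : SatisfiesNewton c S N) (hc : ∀ j, Odd j → j < N → c j = 0) :
    ∀ k, Odd k → k < N → S k = 0 := by
  intro k
  induction k using Nat.strong_induction_on with
  | _ k ih =>
    intro hk hkN
    rw [h k hk.pos hkN.le, hc k hk hkN,
      sum_Ioo_eq_zero_of_odd hc hk hkN.le fun j hj hjo => ih j hj hjo (hj.trans hkN)]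
    simp

theorem eq_neg_mul_of_odd (h : SatisfiesNewton c S N) (hc : ∀ j, Odd j → j < N → c j = 0)
    (hN : Odd N) : S N = -(N * c N) := by
  rw [h N hN.pos le_rfl, sum_Ioo_eq_zero_of_odd hc hN le_rfl fun j hj hjo =>
    h.odd_eq_zero hc j hjo hj, sub_zero]

end SatisfiesNewton

section TypeI

variable {m n : ℕ}

theorem coeff_typeI_eq_zero_of_odd (hm : Odd m) (hn : Even n) {d : ℕ} (hd : Odd d)
    (hd1 : 1 < d) :
    (X ^ (m + 1) + X ^ (m - 1) + X ^ (m - n + 1) + X ^ (m - n - 1) + X + 1 : ℤ[X]).coeff d = 0 := by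
  obtain ⟨a, rfl⟩ := hm
  obtain ⟨b, rfl⟩ := hn
  obtain ⟨e, rfl⟩ := hd
  simp only [coeff_add, coeff_X_pow, coeff_X, coeff_one]
  grind

theorem coeff_typeI_one (hm : Odd m) (hn : Even n) (hnm : n < m) :
    (X ^ (m + 1) + X ^ (m - 1) + X ^ (m - n + 1) + X ^ (m - n - 1) + X + 1 : ℤ[X]).coeff 1 = 1 := by
  obtain ⟨a, rfl⟩ := hm
  obtain ⟨b, rfl⟩ := hn
  simp only [coeff_add, coeff_X_pow, coeff_X, coeff_one]
  grind

end TypeI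

theorem typeI_power_sums_odd_general
    (m n : ℕ) (hm : Odd m) (hn : Even n) (hnm : n ≤ m / 2 - 1)
    (K : Polynomial ℤ)
    (hK : K = X ^ (m + 1) + X ^ (m - 1) + X ^ (m - n + 1) + X ^ (m - n - 1) + X + 1)
    (x : Fin (m + 1) → ℂ)
    (hx : K.map (Int.castRingHom ℂ) = ∏ i, (X - C (x i)))
    (S : ℕ → ℤ)
    (hS : ∀ k, (S k : ℂ) = ∑ i, x i ^ k) :
    S m = -(m : ℤ) ∧ ∀ k, Odd k → 1 ≤ k → k < m → S k = 0 := by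
  have hnewton : SatisfiesNewton (fun j => K.coeff (m + 1 - j)) S m := by
    have h := satisfiesNewton_of_map_eq_prod (Int.castRingHom ℂ).injective_int hx
      fun k => by rw [eq_intCast, hS]
    rw [Fintype.card_fin] at h
    exact h.mono m.le_succ
  have hodd : ∀ j, Odd j → j < m → K.coeff (m + 1 - j) = 0 := fun j hj hjm => by
    rw [hK]
    exact coeff_typeI_eq_zero_of_odd (d := m + 1 - j) hm hn (by grind) (by omega)
  refine ⟨?_, fun k hk _ hkm => hnewton.odd_eq_zero hodd k hk hkm⟩
  rw [hnewton.eq_neg_mul_of_odd hodd hm, Nat.add_sub_cancel_left, hK,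
    coeff_typeI_one hm hn (by have := hm.pos; omega), mul_one]

/-- Let `m` be odd, `n` even with `4 ≤ n ≤ ⌊m/2⌋ − 1`, and
`K = x^{m+1} + x^{m−1} + x^{m−n+1} + x^{m−n−1} + x + 1 ∈ ℤ[x]` with complex roots
`x₀, …, x_m` and power sums `S_k = ∑ᵢ xᵢ^k`. Then `S_m = −m` and `S_k = 0` for every
odd `k` with `1 ≤ k < m`. -/
theorem typeI_power_sums_odd
    (m n : ℕ) (hm : Odd m) (hn : Even n) (hn4 : 4 ≤ n) (hnm : n ≤ m / 2 - 1)
    (K : Polynomial ℤ)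
    (hK : K = X ^ (m + 1) + X ^ (m - 1) + X ^ (m - n + 1) + X ^ (m - n - 1) + X + 1)
    (x : Fin (m + 1) → ℂ)
    (hx : K.map (Int.castRingHom ℂ) = ∏ i, (X - C (x i)))
    (S : ℕ → ℤ)
    (hS : ∀ k, (S k : ℂ) = ∑ i, x i ^ k) :
    S m = -(m : ℤ) ∧ ∀ k, Odd k → 1 ≤ k → k < m → S k = 0 :=
  typeI_power_sums_odd_general m n hm hn hnm K hK x hx S hS
end

section
/- Let m be odd with m + 1 ≡ 0 (mod 4), let n ≡ 2 (mod 4) with n ≠ 6 and 4 ≤ n ≤ ⌊m/2⌋ − 1, and let K(x) = x^{m+1} + x^{m−1} + x^{m−n+1} + x^{m−n−1} + x + 1 ∈ ℤ[x] with complex roots x_0, …, x_m and power sums S_k = ∑_{i=0}^m x_i^k. Then S_{2m−4} + S_{2m−2n} ≡ 2 (mod 4) if (2m mod n) ≤ 6, and S_{2m−4} + S_{2m−2n} ≡ 0 (mod 4) if (2m mod n) > 6. -/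
/-!
Reversing `K` gives `Q = (1 + X²)(1 + Xⁿ) + Xᵐ(1 + X)`, and Newton's identities say that
`∑ S_k X^k = (m + 1) - X Q'/Q`. Writing `Q = V (1 + U)` with `V = (1 + X²)(1 + Xⁿ)` and
`U = Xᵐ(1 + X)/V`, the logarithmic derivative splits as `X V'/V + X U' + O(X^{2m})`, so for
`m < k < 2m` the power sum `S_k` is read off from the expansions of `(1 + X²)⁻¹`, `(1 + Xⁿ)⁻¹` and
`V⁻¹`. Modulo 4, with `k ≡ n ≡ 2 (mod 4)`, only parities of these coefficients survive, and the
recurrences `(1 + X²) V⁻¹ = (1 + Xⁿ)⁻¹`, `(1 + Xⁿ) V⁻¹ = (1 + X²)⁻¹` reduce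
`S_{2m-4} + S_{2m-2n}` to twice the number of the conditions `n ∣ 2m - 4`, `n ∣ 2m`, `n ∣ m - 1`,
`n ∣ m - 3`, which hold exactly when `2m mod n` is `4`, `0`, `2`, `6` respectively.
-/

open Polynomial in
theorem Polynomial.reflect_prod_X_sub_C {R ι : Type*} [CommRing R] (s : Finset ι) (x : ι → R) :
    reflect s.card (∏ i ∈ s, (X - C (x i))) = ∏ i ∈ s, (1 - C (x i) * X) := by
  classical
  induction s using Finset.induction_on with
  | empty => simp
  | insert a s ha ih =>
    rw [Finset.prod_insert ha, Finset.prod_insert ha, Finset.card_insert_of_notMem ha, add_comm,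
      reflect_mul _ _ (natDegree_X_sub_C_le _) ((natDegree_prod_le _ _).trans (by
        simpa using Finset.sum_le_card_nsmul s _ 1 fun i _ => natDegree_X_sub_C_le (x i))), ih,
      reflect_sub, reflect_one_X, reflect_C, pow_one]

namespace PowerSeries

variable {R : Type*} [CommRing R]

noncomputable def eulerOp (F : R⟦X⟧) : R⟦X⟧ := X * d⁄dX R F

theorem coeff_eulerOp (F : R⟦X⟧) (k : ℕ) : coeff k (eulerOp F) = k * coeff k F := by
  cases k with
  | zero => simp [eulerOp]
  | succ k => rw [eulerOp, coeff_succ_X_mul, coeff_derivative, mul_comm]; push_cast; ring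

theorem eulerOp_mul (F G : R⟦X⟧) : eulerOp (F * G) = eulerOp F * G + F * eulerOp G := by
  simp only [eulerOp, Derivation.leibniz, smul_eq_mul]; ring

theorem eulerOp_one_add (F : R⟦X⟧) : eulerOp (1 + F) = eulerOp F := by
  simp [eulerOp]

theorem eulerOp_one_add_X_pow (d : ℕ) : eulerOp (1 + X ^ d : R⟦X⟧) = C (d : R) * X ^ d := by
  ext j
  rw [eulerOp_one_add, coeff_eulerOp, coeff_C_mul, coeff_X_pow]
  split_ifs with h <;> simp [h]

theorem map_eulerOp {S : Type*} [CommRing S] (f : R →+* S) (F : R⟦X⟧) :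
    map f (eulerOp F) = eulerOp (map f F) := by
  ext k; simp [coeff_eulerOp]

theorem mk_pow_mul_one_sub_C_mul_X (a : R) : mk (fun k => a ^ k) * (1 - C a * X) = 1 := by
  ext k
  cases k with
  | zero => simp
  | succ k => simp [mul_sub, ← mul_assoc, pow_succ]

/-- Newton's identities, in generating-function form. -/
theorem mk_sum_pow_mul_prod {ι : Type*} (s : Finset ι) (x : ι → R) :
    mk (fun k => ∑ i ∈ s, x i ^ k) * ∏ i ∈ s, (1 - C (x i) * X) =
      C (s.card : R) * ∏ i ∈ s, (1 - C (x i) * X) - eulerOp (∏ i ∈ s, (1 - C (x i) * X)) := by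
  classical
  induction s using Finset.induction_on with
  | empty => ext k; simp [eulerOp]
  | insert a s ha ih =>
    have hsum : mk (fun k => ∑ i ∈ insert a s, x i ^ k) =
        mk (fun k => x a ^ k) + mk (fun k => ∑ i ∈ s, x i ^ k) := by
      ext k; simp [Finset.sum_insert ha]
    have hlin : eulerOp (1 - C (x a) * X) = -(C (x a) * X) := by
      simp [eulerOp, mul_comm]
    rw [Finset.prod_insert ha, Finset.card_insert_of_notMem ha, hsum, eulerOp_mul, hlin,
      Nat.cast_add_one, map_add, map_one]
    linear_combination (∏ i ∈ s, (1 - C (x i) * X)) * mk_pow_mul_one_sub_C_mul_X (x a)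
      + (1 - C (x a) * X) * ih

/-- Modulo `X^{2m}`, the logarithmic derivative of `V (1 + U)` with `U = Xᵐ T` is that of `V` plus
`eulerOp U`: the neglected term `eulerOp U · U / (1 + U)` is divisible by `X^{2m}` since `Xᵐ`
divides both `U` and `eulerOp U`. -/
theorem X_pow_dvd_sub_of_mul_eq_sub_eulerOp {P V W T : R⟦X⟧} {c : R} {m : ℕ}
    (h : P * (V * (1 + X ^ m * T)) =
      C c * (V * (1 + X ^ m * T)) - eulerOp (V * (1 + X ^ m * T)))
    (hVW : V * W = 1) :
    X ^ (2 * m) ∣ P - (C c - W * eulerOp V - eulerOp (X ^ m * T)) := by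
  set U := X ^ m * T
  obtain ⟨Z, hZ⟩ : X ^ m ∣ eulerOp U :=
    X_pow_dvd_iff.2 fun j hj => by simp [U, coeff_eulerOp, coeff_X_pow_mul', hj.not_ge]
  rw [eulerOp_mul, eulerOp_one_add] at h
  refine ⟨Z * T + (P - C c + W * eulerOp V) * T ^ 2, ?_⟩
  linear_combination (1 - U) * W * h - (1 - U) * ((P - C c) * (1 + U) + eulerOp U) * hVW
    + (X ^ m * T) * hZ

noncomputable def invOneAddXPow (d : ℕ) : R⟦X⟧ :=
  mk fun j => if d ∣ j then (-1) ^ (j / d) else 0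

theorem coeff_one_add_X_pow_mul (d j : ℕ) (F : R⟦X⟧) :
    coeff j ((1 + X ^ d) * F) = coeff j F + if d ≤ j then coeff (j - d) F else 0 := by
  rw [add_mul, one_mul, map_add, coeff_X_pow_mul']

theorem one_add_X_pow_mul_invOneAddXPow {d : ℕ} (hd : 0 < d) :
    (1 + X ^ d) * invOneAddXPow (R := R) d = 1 := by
  ext j
  rw [coeff_one_add_X_pow_mul, coeff_one, invOneAddXPow, coeff_mk, coeff_mk]
  rcases Nat.eq_zero_or_pos j with rfl | hj
  · simp [hd.ne']
  rw [if_neg hj.ne']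
  by_cases hdj : d ≤ j
  · obtain ⟨i, rfl⟩ : ∃ i, j = i + d := ⟨j - d, by omega⟩
    simp only [if_pos hdj, Nat.add_sub_cancel, Nat.dvd_add_self_right]
    split_ifs
    · rw [Nat.add_div_right _ hd, pow_succ]; ring
    · simp
  · rw [if_neg hdj, if_neg fun h => hdj (Nat.le_of_dvd hj h), add_zero]

theorem coeff_invOneAddXPow_mul_invOneAddXPow_of_odd {n j : ℕ} (hn : Even n) (hj : Odd j) :
    coeff j (invOneAddXPow (R := R) 2 * invOneAddXPow n) = 0 := by
  rw [coeff_mul]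
  refine Finset.sum_eq_zero fun p hp => ?_
  rw [Finset.HasAntidiagonal.mem_antidiagonal] at hp
  simp only [invOneAddXPow, coeff_mk]
  split_ifs with h₁ h₂
  · exact absurd (hp ▸ (even_iff_two_dvd.2 h₁).add (even_iff_two_dvd.2 (hn.two_dvd.trans h₂)))
      (Nat.not_even_iff_odd.2 hj)
  all_goals simp

open Polynomial in
theorem mk_mul_reflect_eq_sub_eulerOp {ι : Type*} [Fintype ι] (K : ℤ[X]) (x : ι → ℂ)
    (hx : K.map (Int.castRingHom ℂ) = ∏ i, (Polynomial.X - Polynomial.C (x i)))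
    (S : ℕ → ℤ) (hS : ∀ k, (S k : ℂ) = ∑ i, x i ^ k) :
    mk S * (reflect (Fintype.card ι) K : ℤ⟦X⟧) =
      C (Fintype.card ι : ℤ) * (reflect (Fintype.card ι) K : ℤ⟦X⟧) -
        eulerOp (reflect (Fintype.card ι) K : ℤ⟦X⟧) := by
  apply map_injective (Int.castRingHom ℂ) Int.cast_injective
  have hQ : map (Int.castRingHom ℂ) (reflect (Fintype.card ι) K : ℤ⟦X⟧) =
      ∏ i, (1 - C (x i) * X) := by
    rw [← polynomial_map_coe, ← reflect_map, hx, ← Finset.card_univ, reflect_prod_X_sub_C,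
      ← coeToPowerSeries.ringHom_apply, map_prod]
    simp
  have hP : map (Int.castRingHom ℂ) (mk S) = mk fun k => ∑ i, x i ^ k := by
    ext k; simp [hS]
  rw [map_mul, map_sub, map_mul, map_eulerOp, hQ, hP, map_C, mk_sum_pow_mul_prod]
  simp

end PowerSeries

theorem Nat.dvd_sub_iff_mod_eq {a c n : ℕ} (hc : c < n) (hca : c ≤ a) :
    n ∣ a - c ↔ a % n = c := by
  rw [← Nat.modEq_iff_dvd' hca, Nat.ModEq, Nat.mod_eq_of_lt hc, eq_comm]

theorem Nat.dvd_two_mul_iff_of_mod_four_eq_two {n j : ℕ} (hn : n % 4 = 2) (hj : Even j) :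
    n ∣ 2 * j ↔ n ∣ j := by
  refine ⟨fun h => ?_, fun h => h.mul_left 2⟩
  obtain ⟨k, rfl⟩ : ∃ k, n = 2 * k := ⟨n / 2, by omega⟩
  have hk : Odd k := Nat.odd_iff.2 (by omega)
  exact (Nat.coprime_two_left.2 hk).mul_dvd_of_dvd_of_dvd (even_iff_two_dvd.1 hj)
    ((Nat.mul_dvd_mul_iff_left two_pos).1 h)

namespace TypeIPentanomial

open Polynomial in
theorem reflect_K_eq {R : Type*} [CommSemiring R] {m n : ℕ} (hnm : n + 1 ≤ m) :
    reflect (m + 1)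
        (X ^ (m + 1) + X ^ (m - 1) + X ^ (m - n + 1) + X ^ (m - n - 1) + X + 1 : R[X]) =
      (1 + X ^ 2) * (1 + X ^ n) + X ^ m * (1 + X) := by
  have hX : reflect (m + 1) (X : R[X]) = X ^ m := by
    simpa [revAt_le] using reflect_monomial (R := R) (m + 1) 1
  simp only [reflect_add, reflect_monomial, hX, reflect_one]
  rw [revAt_le le_rfl, revAt_le (by omega), revAt_le (by omega), revAt_le (by omega),
    show m + 1 - (m - 1) = 2 by omega, show m + 1 - (m - n + 1) = n by omega,
    show m + 1 - (m - n - 1) = n + 2 by omega, Nat.sub_self]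
  ring

open PowerSeries

variable {R : Type*} [CommRing R]

/-- `X^{m+1} K(1/X)`, as a power series. -/
noncomputable def reversal (m n : ℕ) : R⟦X⟧ := (1 + X ^ 2) * (1 + X ^ n) + X ^ m * (1 + X)

theorem coeff_of_mul_eq_sub_eulerOp {P : R⟦X⟧} {c : R} {m n k : ℕ} (hn : 0 < n)
    (h : P * reversal m n = C c * reversal m n - eulerOp (reversal m n))
    (hk : k < 2 * m) (hnk : n ≤ k) (hmk : m < k) :
    coeff k P = -(2 * coeff (k - 2) (invOneAddXPow 2) + n * coeff (k - n) (invOneAddXPow n)) -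
      k * (coeff (k - m) (invOneAddXPow 2 * invOneAddXPow n) +
        coeff (k - m - 1) (invOneAddXPow 2 * invOneAddXPow n)) := by
  set A : R⟦X⟧ := invOneAddXPow 2
  set B : R⟦X⟧ := invOneAddXPow n
  have hA : (1 + X ^ 2) * A = 1 := one_add_X_pow_mul_invOneAddXPow two_pos
  have hB : (1 + X ^ n) * B = 1 := one_add_X_pow_mul_invOneAddXPow hn
  have hVW : (1 + X ^ 2) * (1 + X ^ n) * (A * B) = 1 := by
    linear_combination (1 + X ^ n) * B * hA + hB
  have hQ : (1 + X ^ 2) * (1 + X ^ n) * (1 + X ^ m * ((1 + X) * (A * B))) = reversal m n := by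
    rw [reversal]
    linear_combination X ^ m * (1 + X) * hVW
  rw [← hQ] at h
  have hθV : A * B * eulerOp ((1 + X ^ 2) * (1 + X ^ n)) =
      C 2 * (X ^ 2 * A) + C (n : R) * (X ^ n * B) := by
    rw [eulerOp_mul, eulerOp_one_add_X_pow, eulerOp_one_add_X_pow]
    push_cast
    linear_combination C 2 * X ^ 2 * A * hB + C (n : R) * X ^ n * B * hA
  have hcoeff := X_pow_dvd_iff.1 (X_pow_dvd_sub_of_mul_eq_sub_eulerOp h hVW) k hk
  rw [map_sub, sub_eq_zero, hθV] at hcoeff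
  rw [hcoeff, map_sub, map_sub, coeff_C, if_neg (by omega), map_add, coeff_C_mul, coeff_C_mul,
    coeff_X_pow_mul', coeff_X_pow_mul', if_pos (by omega), if_pos (by omega), coeff_eulerOp,
    coeff_X_pow_mul', if_pos hmk.le, ← pow_one X, coeff_one_add_X_pow_mul, if_pos (by omega),
    Nat.sub_sub]
  ring

theorem two_mul_coeff_invOneAddXPow (d j : ℕ) :
    (2 : ZMod 4) * coeff j (invOneAddXPow d) = if d ∣ j then 2 else 0 := by
  simp only [invOneAddXPow, coeff_mk]
  split_ifs
  · rcases neg_one_pow_eq_or (ZMod 4) (j / d) with h | h <;> rw [h] <;> decide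
  · simp

theorem two_mul_coeff_add_two_mul_coeff {d e j : ℕ} (hd : 0 < d) (hdj : d ≤ j) :
    (2 : ZMod 4) * coeff j (invOneAddXPow e * invOneAddXPow d) +
        2 * coeff (j - d) (invOneAddXPow e * invOneAddXPow d) = if e ∣ j then 2 else 0 := by
  have h : (1 + X ^ d) * (invOneAddXPow e * invOneAddXPow d) = invOneAddXPow (R := ZMod 4) e := by
    linear_combination invOneAddXPow e * one_add_X_pow_mul_invOneAddXPow (R := ZMod 4) hd
  rw [← two_mul_coeff_invOneAddXPow, ← mul_add]
  conv_rhs => rw [← h, coeff_one_add_X_pow_mul, if_pos hdj]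

theorem coeff_of_mul_eq_sub_eulerOp_mod_four {P : (ZMod 4)⟦X⟧} {c : ZMod 4} {m n k : ℕ}
    (hn4 : n % 4 = 2) (hm : m % 2 = 1) (hk4 : k % 4 = 2)
    (h : P * reversal m n = C c * reversal m n - eulerOp (reversal m n))
    (hk : k < 2 * m) (hnk : n ≤ k) (hmk : m < k) :
    coeff k P = 2 + (if n ∣ k then 2 else 0) +
      2 * coeff (k - m - 1) (invOneAddXPow 2 * invOneAddXPow n) := by
  have hn : (n : ZMod 4) = 2 := by rw [← ZMod.natCast_mod, hn4]; rfl
  have hk' : (k : ZMod 4) = 2 := by rw [← ZMod.natCast_mod, hk4]; rfl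
  rw [coeff_of_mul_eq_sub_eulerOp (by omega) h hk hnk hmk, hn, hk',
    coeff_invOneAddXPow_mul_invOneAddXPow_of_odd (Nat.even_iff.2 (by omega))
      (Nat.odd_iff.2 (by omega)),
    two_mul_coeff_invOneAddXPow, two_mul_coeff_invOneAddXPow, if_pos (by omega)]
  simp only [Nat.dvd_sub_iff_left hnk dvd_rfl]
  generalize coeff (k - m - 1) (invOneAddXPow 2 * invOneAddXPow n : (ZMod 4)⟦X⟧) = w
  revert w
  split_ifs <;> decide

theorem sum_ite_dvd_eq_ite_mod_le {m n : ℕ} (hn4 : n % 4 = 2) (hn : 6 < n) (hm4 : m % 4 = 3)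
    (hnm : n ≤ m) :
    ((if n ∣ 2 * m - 4 then 2 else 0) + (if n ∣ 2 * m - 2 * n then 2 else 0) +
      (if n ∣ m - 1 then 2 else 0) + (if n ∣ m - 3 then 2 else 0) : ZMod 4) =
      if 2 * m % n ≤ 6 then 2 else 0 := by
  have h4 : n ∣ 2 * m - 4 ↔ 2 * m % n = 4 := Nat.dvd_sub_iff_mod_eq (by omega) (by omega)
  have h0 : n ∣ 2 * m - 2 * n ↔ 2 * m % n = 0 := by
    rw [mul_comm 2 n, Nat.dvd_sub_iff_left (by omega) (dvd_mul_right n 2),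
      Nat.dvd_iff_mod_eq_zero]
  have h2 : n ∣ m - 1 ↔ 2 * m % n = 2 := by
    rw [← Nat.dvd_two_mul_iff_of_mod_four_eq_two hn4 (Nat.even_iff.2 (by omega)),
      show 2 * (m - 1) = 2 * m - 2 by omega]
    exact Nat.dvd_sub_iff_mod_eq (by omega) (by omega)
  have h6 : n ∣ m - 3 ↔ 2 * m % n = 6 := by
    rw [← Nat.dvd_two_mul_iff_of_mod_four_eq_two hn4 (Nat.even_iff.2 (by omega)),
      show 2 * (m - 3) = 2 * m - 6 by omega]
    exact Nat.dvd_sub_iff_mod_eq (by omega) (by omega)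
  have hr : 2 * m % n % 2 = 0 := by
    rw [Nat.mod_mod_of_dvd _ ⟨n / 2, by omega⟩]; omega
  simp only [h4, h0, h2, h6]
  generalize 2 * m % n = r at hr
  split_ifs <;> first | omega | decide

theorem coeff_add_coeff_mod_four {P : (ZMod 4)⟦X⟧} {c : ZMod 4} {m n : ℕ}
    (hn4 : n % 4 = 2) (hn : 6 < n) (hm4 : m % 4 = 3) (hnm : 2 * n < m)
    (h : P * reversal m n = C c * reversal m n - eulerOp (reversal m n)) :
    coeff (2 * m - 4) P + coeff (2 * m - 2 * n) P = if 2 * m % n ≤ 6 then 2 else 0 := by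
  set w : ℕ → ZMod 4 := fun j => coeff j (invOneAddXPow 2 * invOneAddXPow n)
  have hn0 : 0 < n := by omega
  have r₁ : 2 * w (m - 1) + 2 * w (m - n - 1) = 2 := by
    rw [show m - n - 1 = m - 1 - n by omega, two_mul_coeff_add_two_mul_coeff hn0 (by omega),
      if_pos (by omega)]
  have r₂ : 2 * w (m - n - 1) + 2 * w (2 * m - 2 * n - m - 1) = 2 := by
    rw [show 2 * m - 2 * n - m - 1 = m - n - 1 - n by omega,
      two_mul_coeff_add_two_mul_coeff hn0 (by omega), if_pos (by omega)]
  have r₃ : 2 * w (m - 1) + 2 * w (m - 3) = if n ∣ m - 1 then 2 else 0 := by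
    simp only [w, mul_comm (invOneAddXPow 2 : (ZMod 4)⟦X⟧), show m - 3 = m - 1 - 2 by omega]
    exact two_mul_coeff_add_two_mul_coeff two_pos (by omega)
  have r₄ : 2 * w (m - 3) + 2 * w (2 * m - 4 - m - 1) = if n ∣ m - 3 then 2 else 0 := by
    simp only [w, mul_comm (invOneAddXPow 2 : (ZMod 4)⟦X⟧),
      show 2 * m - 4 - m - 1 = m - 3 - 2 by omega]
    exact two_mul_coeff_add_two_mul_coeff two_pos (by omega)
  rw [coeff_of_mul_eq_sub_eulerOp_mod_four hn4 (by omega) (by omega) h (by omega) (by omega)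
      (by omega),
    coeff_of_mul_eq_sub_eulerOp_mod_four hn4 (by omega) (by omega) h (by omega) (by omega)
      (by omega),
    ← sum_ite_dvd_eq_ite_mod_le hn4 hn hm4 (by omega), ← r₃, ← r₄]
  have h4 : (4 : ZMod 4) = 0 := rfl
  linear_combination r₂ - r₁ + (1 - w (m - 3)) * h4

end TypeIPentanomial

open Polynomial

theorem typeI_power_sums_case3_general
    (m n : ℕ) (hm4 : (m + 1) % 4 = 0)
    (hn4 : n % 4 = 2) (hn6 : n ≠ 6) (hn : 4 ≤ n) (hnm : n ≤ m / 2 - 1)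
    (K : Polynomial ℤ)
    (hK : K = X ^ (m + 1) + X ^ (m - 1) + X ^ (m - n + 1) + X ^ (m - n - 1) + X + 1)
    (x : Fin (m + 1) → ℂ)
    (hx : K.map (Int.castRingHom ℂ) = ∏ i, (X - C (x i)))
    (S : ℕ → ℤ)
    (hS : ∀ k, (S k : ℂ) = ∑ i, x i ^ k) :
    (2 * m % n ≤ 6 → Int.ModEq 4 (S (2 * m - 4) + S (2 * m - 2 * n)) 2) ∧
    (6 < 2 * m % n → Int.ModEq 4 (S (2 * m - 4) + S (2 * m - 2 * n)) 0) := by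
  have hnewton := PowerSeries.mk_mul_reflect_eq_sub_eulerOp K x hx S hS
  rw [Fintype.card_fin, hK, TypeIPentanomial.reflect_K_eq (by omega)] at hnewton
  have hmod := congrArg (PowerSeries.map (Int.castRingHom (ZMod 4))) hnewton
  simp only [map_mul, map_sub, map_add, map_pow, map_one, PowerSeries.map_X, PowerSeries.map_C,
    PowerSeries.map_eulerOp, Polynomial.coe_add, Polynomial.coe_mul, Polynomial.coe_pow,
    Polynomial.coe_one, Polynomial.coe_X] at hmod
  have hsum := TypeIPentanomial.coeff_add_coeff_mod_four hn4 (by omega) (by omega) (by omega) hmod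
  simp only [PowerSeries.coeff_map, PowerSeries.coeff_mk, eq_intCast] at hsum
  rw [← Int.cast_add] at hsum
  constructor <;> intro hr
  · rw [if_pos hr] at hsum
    exact (ZMod.intCast_eq_intCast_iff _ 2 4).1 hsum
  · rw [if_neg (by omega)] at hsum
    exact (ZMod.intCast_eq_intCast_iff _ 0 4).1 hsum

/-- CASE 3 (odd degree): for odd `m` with `m + 1 ≡ 0 (mod 4)`, `n ≡ 2 (mod 4)` with `n ≠ 6`
and `4 ≤ n ≤ ⌊m/2⌋ − 1`, with `K = x^{m+1} + x^{m−1} + x^{m−n+1} + x^{m−n−1} + x + 1 ∈ ℤ[x]`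
and power sums `S_k` of its complex roots:
`S_{2m−4} + S_{2m−2n} ≡ 2 (mod 4)` if `(2m mod n) ≤ 6`, and `≡ 0 (mod 4)` if `(2m mod n) > 6`. -/
theorem typeI_power_sums_case3
    (m n : ℕ) (hm : Odd m) (hm4 : (m + 1) % 4 = 0)
    (hn4 : n % 4 = 2) (hn6 : n ≠ 6) (hn : 4 ≤ n) (hnm : n ≤ m / 2 - 1)
    (K : Polynomial ℤ)
    (hK : K = X ^ (m + 1) + X ^ (m - 1) + X ^ (m - n + 1) + X ^ (m - n - 1) + X + 1)
    (x : Fin (m + 1) → ℂ)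
    (hx : K.map (Int.castRingHom ℂ) = ∏ i, (X - C (x i)))
    (S : ℕ → ℤ)
    (hS : ∀ k, (S k : ℂ) = ∑ i, x i ^ k) :
    (2 * m % n ≤ 6 → Int.ModEq 4 (S (2 * m - 4) + S (2 * m - 2 * n)) 2) ∧
    (6 < 2 * m % n → Int.ModEq 4 (S (2 * m - 4) + S (2 * m - 2 * n)) 0) :=
  typeI_power_sums_case3_general m n hm4 hn4 hn6 hn hnm K hK x hx S hS
end
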